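/- Let S²T*⊗T_v* denote the real vector space of trilinear forms B : V × V × V → ℝ that are symmetric in the first two arguments (B(X,Y,Z) = B(Y,X,Z)) and semi-basic in the third argument. For B in this space define (σ_J B)(X,Y,Z) = B(X,JY,Z) − B(X,JZ,Y) and (σ_h B)(X,Y,Z) = B(X,hY,Z) − B(X,hZ,Y), and let g² = { B ∈ S²T*⊗T_v* : σ_J B = 0 and σ_h B = 0 }. Then the dimension of g² over ℝ equals (n+1)²(n+2)/2. (This is the computation of the dimension of the kernel g²(P) of the first prolongation σ²(P) of the symbol of the operator P = (d_J, d_h).) -/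

import Mathlib

/-!
A form in `g²` is determined by its values on triples of basis vectors `e_α`, `f_i`.
Semi-basicness, `σ_J B = 0` (with `J e_0 = 0`) and `σ_h B = 0` kill every value with a
vertical third argument or involving both `e_0` and a vertical vector. What survives are the
values on `(e_α, e_β, e_γ)`, `(e_a, f_i, e_c)` and `(f_i, f_j, e_k)` with `a, c, k ≥ 1`, and
the two symmetry conditions make each of these three arrays totally symmetric. Conversely any
three totally symmetric arrays assemble to a form in `g²`, so
`g² ≅ S³ℝ^{n+1} ⊕ S³ℝ^n ⊕ S³ℝ^n`, of dimension `C(n+3,3) + 2 C(n+2,3) = (n+1)²(n+2)/2`.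
-/

open Module

/-- Model of the tangent space of `J¹π` at a point: `V = ℝ^{n+1} × ℝ^n`, the first
factor spanned by the horizontal vectors `e_0, …, e_n` (`e_0` the time direction),
the second by the vertical vectors `f_1, …, f_n` (here `f_k = fbase ⟨k-1,_⟩`). -/
abbrev Vv (n : ℕ) : Type := (Fin (n + 1) → ℝ) × (Fin n → ℝ)

/-- A vector of `V` is vertical if it lies in the span of `f_1, …, f_n`,
i.e. its first component vanishes. -/
def IsVert {n : ℕ} (v : Vv n) : Prop := v.1 = 0

/-- The vertical endomorphism `J : V → V`: `J e_0 = 0`, `J e_i = f_i` (1 ≤ i ≤ n),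
`J f_i = 0`. -/
noncomputable def Jv (n : ℕ) : Vv n →ₗ[ℝ] Vv n :=
  LinearMap.prod 0
    ((LinearMap.funLeft ℝ ℝ Fin.succ).comp (LinearMap.fst ℝ (Fin (n + 1) → ℝ) (Fin n → ℝ)))

/-- The horizontal projector `h : V → V`: `h e_α = e_α` (0 ≤ α ≤ n), `h f_i = 0`. -/
noncomputable def Hv (n : ℕ) : Vv n →ₗ[ℝ] Vv n :=
  LinearMap.prod (LinearMap.fst ℝ (Fin (n + 1) → ℝ) (Fin n → ℝ)) 0

set_option maxSynthPendingDepth 3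
set_option synthInstance.maxHeartbeats 400000

/-- `g²(P)`: trilinear forms `B` on `V` symmetric in the first two arguments,
semi-basic in the third argument, and with `σ_J B = 0` and `σ_h B = 0`, where
`(σ_K B)(X,Y,Z) = B(X,KY,Z) − B(X,KZ,Y)`. -/
noncomputable def g2 (n : ℕ) : Submodule ℝ (Vv n →ₗ[ℝ] Vv n →ₗ[ℝ] Vv n →ₗ[ℝ] ℝ) where
  carrier := { B | (∀ X Y Z, B X Y Z = B Y X Z) ∧
    (∀ X Y v, IsVert v → B X Y v = 0) ∧
    (∀ X Y Z, B X (Jv n Y) Z = B X (Jv n Z) Y) ∧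
    (∀ X Y Z, B X (Hv n Y) Z = B X (Hv n Z) Y) }
  add_mem' := by
    rintro A B ⟨a1, a2, a3, a4⟩ ⟨b1, b2, b3, b4⟩
    refine ⟨fun X Y Z => ?_, fun X Y v hv => ?_, fun X Y Z => ?_, fun X Y Z => ?_⟩
    · simp only [LinearMap.add_apply]; rw [a1, b1]
    · simp [a2 X Y v hv, b2 X Y v hv]
    · simp only [LinearMap.add_apply]; rw [a3, b3]
    · simp only [LinearMap.add_apply]; rw [a4, b4]
  zero_mem' := by
    refine ⟨fun X Y Z => ?_, fun X Y v hv => ?_, fun X Y Z => ?_, fun X Y Z => ?_⟩ <;> simp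
  smul_mem' := by
    rintro c A ⟨a1, a2, a3, a4⟩
    refine ⟨fun X Y Z => ?_, fun X Y v hv => ?_, fun X Y Z => ?_, fun X Y Z => ?_⟩
    · simp only [LinearMap.smul_apply, smul_eq_mul]; rw [a1]
    · simp [a2 X Y v hv]
    · simp only [LinearMap.smul_apply, smul_eq_mul]; rw [a3]
    · simp only [LinearMap.smul_apply, smul_eq_mul]; rw [a4]

section SymTensor3

variable (K : Type*) [Semiring K] (α : Type*)

def symTensor3 : Submodule K (α → α → α → K) where
  carrier := {f | (∀ a b c, f a b c = f b a c) ∧ ∀ a b c, f a b c = f a c b}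
  add_mem' := fun ⟨hf₁, hf₂⟩ ⟨hg₁, hg₂⟩ =>
    ⟨fun a b c => congrArg₂ (· + ·) (hf₁ a b c) (hg₁ a b c),
      fun a b c => congrArg₂ (· + ·) (hf₂ a b c) (hg₂ a b c)⟩
  zero_mem' := ⟨fun _ _ _ => rfl, fun _ _ _ => rfl⟩
  smul_mem' r _ := fun ⟨hf₁, hf₂⟩ =>
    ⟨fun a b c => congrArg (r * ·) (hf₁ a b c), fun a b c => congrArg (r * ·) (hf₂ a b c)⟩

def ofSym3 : (Sym α 3 → K) →ₗ[K] α → α → α → K where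
  toFun g a b c := g ⟨{a, b, c}, rfl⟩
  map_add' _ _ := rfl
  map_smul' _ _ := rfl

variable {K α}

namespace symTensor3

variable {f : α → α → α → K}

theorem apply_comm13 (hf : f ∈ symTensor3 K α) (a b c : α) : f a b c = f c b a := by
  rw [hf.2, hf.1, hf.2]

theorem apply_eq_of_multiset_eq (hf : f ∈ symTensor3 K α) {a b c x y z : α}
    (h : ({a, b, c} : Multiset α) = {x, y, z}) : f a b c = f x y z := by
  have hperm : [x, y, z] ∈ [a, b, c].permutations :=
    List.mem_permutations.2 (Multiset.coe_eq_coe.1 h.symm)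
  simp only [List.permutations, List.permutationsAux, List.foldr_cons, List.permutationsAux.rec,
    List.foldr_nil, List.permutationsAux2_snd_nil, List.permutationsAux2_snd_cons, List.append_nil,
    id_eq, List.cons_append, List.nil_append, List.mem_cons, List.cons.injEq, and_true,
    List.not_mem_nil, or_false] at hperm
  rcases hperm with ⟨rfl, rfl, rfl⟩ | ⟨rfl, rfl, rfl⟩ | ⟨rfl, rfl, rfl⟩ | ⟨rfl, rfl, rfl⟩ |
    ⟨rfl, rfl, rfl⟩ | ⟨rfl, rfl, rfl⟩
  · rfl
  · exact hf.1 y x z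
  · exact apply_comm13 hf z y x
  · rw [hf.1, hf.2]
  · rw [hf.2, hf.1]
  · exact hf.2 x z y

end symTensor3

theorem ofSym3_injective : Function.Injective (ofSym3 K α) := by
  intro g g' h
  funext ⟨s, hs⟩
  obtain ⟨a, b, c, rfl⟩ := Multiset.card_eq_three.1 hs
  exact congrFun (congrFun (congrFun h a) b) c

theorem range_ofSym3 : LinearMap.range (ofSym3 K α) = symTensor3 K α := by
  apply le_antisymm
  · rintro _ ⟨g, rfl⟩
    refine ⟨fun a b c => congrArg g (Subtype.ext ?_), fun a b c => congrArg g (Subtype.ext ?_)⟩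
    · exact Multiset.cons_swap a b {c}
    · exact congrArg (a ::ₘ ·) (Multiset.pair_comm b c)
  · intro f hf
    have hrep (s : Sym α 3) : ∃ x y z, (s : Multiset α) = {x, y, z} :=
      Multiset.card_eq_three.1 s.2
    choose x y z hxyz using hrep
    refine ⟨fun s => f (x s) (y s) (z s), ?_⟩
    funext a b c
    exact (symTensor3.apply_eq_of_multiset_eq hf (hxyz ⟨{a, b, c}, rfl⟩)).symm

end SymTensor3

theorem finrank_symTensor3 (K : Type*) [Ring K] [StrongRankCondition K] (α : Type*) [Fintype α]
    [DecidableEq α] :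
    finrank K (symTensor3 K α) = (Fintype.card α + 2).choose 3 := by
  rw [← range_ofSym3, LinearMap.finrank_range_of_inj ofSym3_injective,
    finrank_fintype_fun_eq_card, Sym.card_sym_eq_choose]
  rfl

section Trilinear

variable {R : Type*} [CommSemiring R] {ι₁ ι₂ ι₃ M₁ M₂ M₃ N : Type*}
  [AddCommMonoid M₁] [AddCommMonoid M₂] [AddCommMonoid M₃] [AddCommMonoid N]
  [Module R M₁] [Module R M₂] [Module R M₃] [Module R N]

theorem trilinear_ext (b₁ : Basis ι₁ R M₁) (b₂ : Basis ι₂ R M₂) (b₃ : Basis ι₃ R M₃)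
    {B B' : M₁ →ₗ[R] M₂ →ₗ[R] M₃ →ₗ[R] N}
    (h : ∀ i j k, B (b₁ i) (b₂ j) (b₃ k) = B' (b₁ i) (b₂ j) (b₃ k)) : B = B' :=
  b₁.ext fun i => LinearMap.ext_basis b₂ b₃ (h i)

variable {ι M : Type*} [AddCommMonoid M] [Module R M]

noncomputable def trilinearOfCoeffs (b : Basis ι R M) (c : ι → ι → ι → R) :
    M →ₗ[R] M →ₗ[R] M →ₗ[R] R :=
  b.constr R fun u => b.constr R fun v => b.constr R (c u v)

@[simp]
theorem trilinearOfCoeffs_basis (b : Basis ι R M) (c : ι → ι → ι → R) (u v w : ι) :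
    trilinearOfCoeffs b c (b u) (b v) (b w) = c u v w := by
  simp [trilinearOfCoeffs, Basis.constr_basis]

variable {B : M →ₗ[R] M →ₗ[R] M →ₗ[R] R}

theorem trilinear_comm12_of_basis (b : Basis ι R M)
    (h : ∀ u v w, B (b u) (b v) (b w) = B (b v) (b u) (b w))
    (X Y Z : M) : B X Y Z = B Y X Z :=
  LinearMap.congr_fun (LinearMap.congr_fun₂ (trilinear_ext b b b (B' := B.flip) h) X Y) Z

theorem trilinear_comp_comm23_of_basis (b : Basis ι R M) (K : M →ₗ[R] M)
    (h : ∀ u v w, B (b u) (K (b v)) (b w) = B (b u) (K (b w)) (b v)) (X Y Z : M) :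
    B X (K Y) Z = B X (K Z) Y :=
  LinearMap.congr_fun (LinearMap.congr_fun₂ (trilinear_ext b b b (B := B.compl₂ K)
    (B' := LinearMap.lflip.toLinearMap ∘ₗ B.compl₂ K) h) X Y) Z

end Trilinear

-- `inl none ↦ e_0`, `inl (some a) ↦ e_{a+1}`, `inr i ↦ f_{i+1}`.
noncomputable def basisV (n : ℕ) : Basis (Option (Fin n) ⊕ Fin n) ℝ (Vv n) :=
  ((Pi.basisFun ℝ (Fin (n + 1))).reindex (finSuccEquiv n)).prod (Pi.basisFun ℝ (Fin n))

def g2Coeffs {K β : Type*} [Zero K] (S : Option β → Option β → Option β → K)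
    (T U : β → β → β → K) : Option β ⊕ β → Option β ⊕ β → Option β ⊕ β → K
  | .inl x, .inl y, .inl z => S x y z
  | .inl (some a), .inr i, .inl (some c) => T a i c
  | .inr i, .inl (some a), .inl (some c) => T a i c
  | .inr i, .inr j, .inl (some k) => U i j k
  | _, _, _ => 0

section G2

variable {n : ℕ}

local notation "𝔢" => basisV n

theorem basisV_inr (i : Fin n) : 𝔢 (.inr i) = LinearMap.inr ℝ _ _ (Pi.single i 1) := by
  simp [basisV]

@[simp]
theorem Jv_basisV_inl_none : Jv n (𝔢 (.inl none)) = 0 := by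
  ext i <;> simp [basisV, Jv, Fin.succ_ne_zero]

@[simp]
theorem Jv_basisV_inl_some (a : Fin n) : Jv n (𝔢 (.inl (some a))) = 𝔢 (.inr a) := by
  ext i <;> simp [basisV, Jv, Pi.single_apply]

@[simp]
theorem Jv_basisV_inr (i : Fin n) : Jv n (𝔢 (.inr i)) = 0 := by
  ext <;> simp [basisV, Jv]

@[simp]
theorem Hv_basisV_inl (x : Option (Fin n)) : Hv n (𝔢 (.inl x)) = 𝔢 (.inl x) := by
  ext <;> simp [basisV, Hv]

@[simp]
theorem Hv_basisV_inr (i : Fin n) : Hv n (𝔢 (.inr i)) = 0 := by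
  ext <;> simp [basisV, Hv]

theorem apply_isVert_eq_zero_of_basisV {B : Vv n →ₗ[ℝ] Vv n →ₗ[ℝ] Vv n →ₗ[ℝ] ℝ}
    (h : ∀ u v i, B (𝔢 u) (𝔢 v) (𝔢 (.inr i)) = 0) (X Y v : Vv n) (hv : IsVert v) :
    B X Y v = 0 := by
  -- `B` with its third argument restricted to the vertical factor vanishes on a basis.
  have hB : B.compr₂ (LinearMap.lcomp ℝ ℝ (LinearMap.inr ℝ _ _)) = 0 :=
    trilinear_ext 𝔢 𝔢 (Pi.basisFun ℝ (Fin n)) fun u v i => by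
      simpa [basisV_inr] using h u v i
  have hv : v = LinearMap.inr ℝ _ _ v.2 := Prod.ext hv rfl
  rw [hv]
  exact LinearMap.congr_fun (LinearMap.congr_fun₂ hB X Y) v.2

section Coeffs

variable (B : Vv n →ₗ[ℝ] Vv n →ₗ[ℝ] Vv n →ₗ[ℝ] ℝ)

noncomputable def horizCoeffs (x y z : Option (Fin n)) : ℝ :=
  B (𝔢 (.inl x)) (𝔢 (.inl y)) (𝔢 (.inl z))

noncomputable def mixedCoeffs (a i c : Fin n) : ℝ :=
  B (𝔢 (.inl (some a))) (𝔢 (.inr i)) (𝔢 (.inl (some c)))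

noncomputable def vertCoeffs (i j k : Fin n) : ℝ :=
  B (𝔢 (.inr i)) (𝔢 (.inr j)) (𝔢 (.inl (some k)))

end Coeffs

theorem trilinearOfCoeffs_g2Coeffs_mem {S : Option (Fin n) → Option (Fin n) → Option (Fin n) → ℝ}
    {T U : Fin n → Fin n → Fin n → ℝ} (hS : S ∈ symTensor3 ℝ _) (hT : T ∈ symTensor3 ℝ _)
    (hU : U ∈ symTensor3 ℝ _) : trilinearOfCoeffs 𝔢 (g2Coeffs S T U) ∈ g2 n := by
  refine ⟨trilinear_comm12_of_basis 𝔢 ?_, apply_isVert_eq_zero_of_basisV ?_,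
    trilinear_comp_comm23_of_basis 𝔢 _ ?_, trilinear_comp_comm23_of_basis 𝔢 _ ?_⟩
  · rintro ((_ | a) | i) ((_ | b) | j) ((_ | c) | k) <;> simp [g2Coeffs, hS.1 _ _, hU.1 _ _]
  · rintro ((_ | a) | i) ((_ | b) | j) k <;> simp [g2Coeffs]
  · rintro ((_ | a) | i) ((_ | b) | j) ((_ | c) | k) <;> simp [g2Coeffs, hT.2 _ _, hU.2 _ _]
  · rintro ((_ | a) | i) ((_ | b) | j) ((_ | c) | k) <;>
      simp [g2Coeffs, hS.2 _ _, symTensor3.apply_comm13 hT _ _]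

variable {B : Vv n →ₗ[ℝ] Vv n →ₗ[ℝ] Vv n →ₗ[ℝ] ℝ} (hB : B ∈ g2 n)
include hB

theorem apply_basisV_inr_of_mem_g2 (X Y : Vv n) (i : Fin n) : B X Y (𝔢 (.inr i)) = 0 :=
  hB.2.1 X Y _ (by simp [IsVert, basisV])

theorem apply_basisV_inr_inl_none_of_mem_g2 (X : Vv n) (i : Fin n) :
    B X (𝔢 (.inr i)) (𝔢 (.inl none)) = 0 := by
  simpa using hB.2.2.1 X (𝔢 (.inl (some i))) (𝔢 (.inl none))

theorem apply_basisV_inl_none_inr_of_mem_g2 (i : Fin n) (z : Option (Fin n)) :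
    B (𝔢 (.inl none)) (𝔢 (.inr i)) (𝔢 (.inl z)) = 0 := by
  have hh := hB.2.2.2 (𝔢 (.inr i)) (𝔢 (.inl none)) (𝔢 (.inl z))
  simp only [Hv_basisV_inl] at hh
  rw [hB.1, hh, hB.1, apply_basisV_inr_inl_none_of_mem_g2 hB]

theorem horizCoeffs_mem : horizCoeffs B ∈ symTensor3 ℝ (Option (Fin n)) :=
  ⟨fun _ _ _ => hB.1 _ _ _, fun x y z => by
    simpa only [horizCoeffs, Hv_basisV_inl] using hB.2.2.2 (𝔢 (.inl x)) (𝔢 (.inl y)) (𝔢 (.inl z))⟩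

theorem mixedCoeffs_mem : mixedCoeffs B ∈ symTensor3 ℝ (Fin n) := by
  have comm23 (a i c : Fin n) : mixedCoeffs B a i c = mixedCoeffs B a c i := by
    simpa only [mixedCoeffs, Jv_basisV_inl_some] using
      hB.2.2.1 (𝔢 (.inl (some a))) (𝔢 (.inl (some i))) (𝔢 (.inl (some c)))
  have comm13 (a i c : Fin n) : mixedCoeffs B a i c = mixedCoeffs B c i a := by
    have hh := hB.2.2.2 (𝔢 (.inr i)) (𝔢 (.inl (some a))) (𝔢 (.inl (some c)))
    simp only [Hv_basisV_inl] at hh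
    rw [mixedCoeffs, mixedCoeffs, hB.1, hh, hB.1]
  exact ⟨fun a i c => by rw [comm23, comm13, comm23], comm23⟩

theorem vertCoeffs_mem : vertCoeffs B ∈ symTensor3 ℝ (Fin n) :=
  ⟨fun _ _ _ => hB.1 _ _ _, fun i j k => by
    simpa only [vertCoeffs, Jv_basisV_inl_some] using
      hB.2.2.1 (𝔢 (.inr i)) (𝔢 (.inl (some j))) (𝔢 (.inl (some k)))⟩

theorem trilinearOfCoeffs_g2Coeffs_eq :
    trilinearOfCoeffs 𝔢 (g2Coeffs (horizCoeffs B) (mixedCoeffs B) (vertCoeffs B)) = B := by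
  refine trilinear_ext 𝔢 𝔢 𝔢 ?_
  rintro ((_ | a) | i) ((_ | b) | j) ((_ | c) | k) <;>
    simp [g2Coeffs, horizCoeffs, mixedCoeffs, vertCoeffs, apply_basisV_inr_of_mem_g2 hB,
      apply_basisV_inr_inl_none_of_mem_g2 hB, apply_basisV_inl_none_inr_of_mem_g2 hB,
      hB.1 (𝔢 (.inr _)) (𝔢 (.inl _))]

end G2

noncomputable def g2EquivSymTensor3 (n : ℕ) :
    g2 n ≃ₗ[ℝ] symTensor3 ℝ (Option (Fin n)) × symTensor3 ℝ (Fin n) × symTensor3 ℝ (Fin n) where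
  toFun B := (⟨_, horizCoeffs_mem B.2⟩, ⟨_, mixedCoeffs_mem B.2⟩, ⟨_, vertCoeffs_mem B.2⟩)
  map_add' _ _ := rfl
  map_smul' _ _ := rfl
  invFun p := ⟨_, trilinearOfCoeffs_g2Coeffs_mem p.1.2 p.2.1.2 p.2.2.2⟩
  left_inv B := Subtype.ext (trilinearOfCoeffs_g2Coeffs_eq B.2)
  right_inv _ := by
    ext <;> simp [horizCoeffs, mixedCoeffs, vertCoeffs, g2Coeffs]

theorem add_three_choose_three_add_two_mul (n : ℕ) :
    (n + 3).choose 3 + 2 * (n + 2).choose 3 = (n + 1) ^ 2 * (n + 2) / 2 := by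
  have h₁ : 6 * (n + 3).choose 3 = (n + 1) * ((n + 2) * (n + 3)) := by
    simpa [Nat.descFactorial_succ, Nat.factorial] using
      (Nat.descFactorial_eq_factorial_mul_choose (n + 3) 3).symm
  have h₂ : 6 * (n + 2).choose 3 = n * ((n + 1) * (n + 2)) := by
    simpa [Nat.descFactorial_succ, Nat.factorial] using
      (Nat.descFactorial_eq_factorial_mul_choose (n + 2) 3).symm
  refine (Nat.div_eq_of_eq_mul_left two_pos ?_).symm
  linarith

theorem stmt2_general (n : ℕ) :
    Module.finrank ℝ (g2 n) = (n + 1) ^ 2 * (n + 2) / 2 := by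
  rw [(g2EquivSymTensor3 n).finrank_eq, finrank_prod, finrank_prod, finrank_symTensor3,
    finrank_symTensor3, Fintype.card_option, Fintype.card_fin, ← two_mul]
  exact add_three_choose_three_add_two_mul n

/-- The kernel `g²(P)` of the first prolongation `σ²(P)` of the symbol of the
operator `P = (d_J, d_h)` has dimension `(n+1)²(n+2)/2` over `ℝ`. -/
theorem stmt2 (n : ℕ) (hn : 1 ≤ n) :
    Module.finrank ℝ (g2 n) = (n + 1) ^ 2 * (n + 2) / 2 :=
  stmt2_general n
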